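/- Let E, F be vector lattices with F Dedekind complete and S, T positive abstract Uryson operators from E to F. Then for every e ∈ E: π_S T e = sup over ε > 0 of inf{ ρ T f + ρ^⊥ T e : ρ S(e − f) ≤ ε Se, f a fragment of e, ρ a band projection on F }, where π_S is the band projection onto the band generated by S in U(E,F). -/

import Mathlib

/-!
Write `G = T - R` and `Φₙ = R ⊓ n S`, computed pointwise as
`Φₙ x = inf {R h + n S (x - h) : h ⊑ x}` (meets of Uryson operators are again Uryson operators,
because fragments of a disjoint sum split along the summands). Since `R` lies in the band of `S`,
`R = sup_n Φₙ`; since `G ⊥ S`, also `G ⊓ n S = 0` for every `n`.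

Lower bound: for admissible `(ρ, f)`,
`ρ (R (e - f)) ≤ n ρ (S (e - f)) + (R (e - f) - n S (e - f))⁺ ≤ n ε S e + (R e - Φₙ e)`,
so the infimum for `ε` is at least `Φₙ e - n ε S e`; let `ε → 0`, then take the supremum over `n`.

Upper bound: for a fragment `f`, let `ρ` be the projection onto the complement of the band of
`(S (e - f) - ε S e)⁺`. It is admissible, and its value is at most
`R e + G f + n S (e - f) + (g - n ε S e)⁺`, where `g` is the component of `G e` in the band
of `S e`.
Taking the infimum over `f` and using `G ⊓ n S = 0` leaves `R e + (g - n ε S e)⁺`, and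
`(g - n ε S e)⁺ ↓ 0`.
-/

/-- Orthogonal additivity: `T (x + y) = T x + T y` whenever `|x| ⊓ |y| = 0`. -/
def OrthAdd {E F : Type*} [Lattice E] [AddCommGroup E] [AddCommGroup F]
    (T : E → F) : Prop :=
  ∀ x y : E, |x| ⊓ |y| = 0 → T (x + y) = T x + T y

/-- `T` maps order bounded sets to order bounded sets. -/
def OrderBoundedMap {E F : Type*} [Preorder E] [Preorder F] (T : E → F) : Prop :=
  ∀ a b : E, ∃ c d : F, ∀ x ∈ Set.Icc a b, T x ∈ Set.Icc c d

/-- An abstract Uryson operator: orthogonally additive and order bounded. -/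
def Uryson {E F : Type*} [Lattice E] [AddCommGroup E] [Lattice F] [AddCommGroup F]
    (T : E → F) : Prop :=
  OrthAdd T ∧ OrderBoundedMap T

/-- `z` is a fragment (component) of `x`: `z ⊥ (x - z)`. -/
def Fragment {E : Type*} [Lattice E] [AddCommGroup E] (z x : E) : Prop :=
  |z| ⊓ |x - z| = 0

/-- A band (order) projection on a Dedekind complete vector lattice `F`:
additive, idempotent, and `0 ≤ ρ x ≤ x` for all `x ≥ 0`. -/
def IsBandProj {F : Type*} [Lattice F] [AddCommGroup F] (ρ : F → F) : Prop :=
  (∀ x y : F, ρ (x + y) = ρ x + ρ y) ∧ (∀ x, ρ (ρ x) = ρ x) ∧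
    ∀ x : F, 0 ≤ x → 0 ≤ ρ x ∧ ρ x ≤ x

/-- Disjointness of two positive abstract Uryson operators `T, S` in `U(E,F)`:
`T ⊓ S = 0`, i.e. every abstract Uryson operator `R` with `R ≤ T` and `R ≤ S`
(pointwise, which is the order of `U(E,F)`) satisfies `R ≤ 0`. -/
def UDisjointPos {E F : Type*} [Lattice E] [AddCommGroup E] [Lattice F] [AddCommGroup F]
    (T S : E → F) : Prop :=
  ∀ R : E → F, Uryson R → (∀ x, R x ≤ T x) → (∀ x, R x ≤ S x) → ∀ x, R x ≤ 0

lemma inf_eq_zero_of_le {α : Type*} [Lattice α] [Zero α] {a b p q : α} (ha : 0 ≤ a) (hb : 0 ≤ b)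
    (hap : a ≤ p) (hbq : b ≤ q) (hpq : p ⊓ q = 0) : a ⊓ b = 0 :=
  le_antisymm ((inf_le_inf hap hbq).trans hpq.le) (le_inf ha hb)

section LatticeGroup

variable {α : Type*} [Lattice α] [AddCommGroup α] [AddLeftMono α] {a b c : α}

lemma sub_inf_self (a b : α) : a - a ⊓ b = (a - b)⁺ := by
  rw [sub_inf, sub_self, posPart_def, sup_comm]

lemma inf_add_posPart_sub (a b : α) : a ⊓ b + (a - b)⁺ = a := by
  rw [← sub_inf_self]; abel

lemma posPart_sub_of_inf_eq_zero (h : a ⊓ b = 0) : (a - b)⁺ = a := by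
  rw [← sub_inf_self, h, sub_zero]

lemma posPart_le_abs (a : α) : a⁺ ≤ |a| := sup_le (le_abs_self a) (abs_nonneg a)

lemma negPart_le_abs (a : α) : a⁻ ≤ |a| := by
  simpa only [posPart_neg, abs_neg] using posPart_le_abs (-a)

lemma abs_sub_le_abs_add_abs (a b : α) : |a - b| ≤ |a| + |b| := by
  simpa only [sub_eq_add_neg, abs_neg] using abs_add_le a (-b)

lemma abs_inf_abs_eq_zero_of_le {p q : α} (hap : |a| ≤ p) (hbq : |b| ≤ q) (hpq : p ⊓ q = 0) :
    |a| ⊓ |b| = 0 :=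
  inf_eq_zero_of_le (abs_nonneg a) (abs_nonneg b) hap hbq hpq

lemma add_inf_le_inf_add_inf (ha : 0 ≤ a) (hb : 0 ≤ b) (hc : 0 ≤ c) :
    (a + b) ⊓ c ≤ a ⊓ c + b ⊓ c := by
  rw [inf_add, add_inf, add_inf]
  refine le_inf (le_inf inf_le_left ?_) (le_inf ?_ ?_)
  · exact inf_le_right.trans (le_add_of_nonneg_left ha)
  · exact inf_le_right.trans (le_add_of_nonneg_right hb)
  · exact inf_le_right.trans (le_add_of_nonneg_left hc)

lemma add_inf_eq_zero (ha : 0 ≤ a) (hb : 0 ≤ b) (hc : 0 ≤ c) (hac : a ⊓ c = 0)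
    (hbc : b ⊓ c = 0) : (a + b) ⊓ c = 0 :=
  le_antisymm (by simpa [hac, hbc] using add_inf_le_inf_add_inf ha hb hc)
    (le_inf (add_nonneg ha hb) hc)

lemma add_inf_add_eq_zero {a' b' : α} (ha : 0 ≤ a) (ha' : 0 ≤ a') (hb : 0 ≤ b) (hb' : 0 ≤ b')
    (hab : a ⊓ b = 0) (hab' : a ⊓ b' = 0) (ha'b : a' ⊓ b = 0) (ha'b' : a' ⊓ b' = 0) :
    (a + a') ⊓ (b + b') = 0 := by
  refine add_inf_eq_zero ha ha' (add_nonneg hb hb') ?_ ?_ <;> rw [inf_comm] <;>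
    refine add_inf_eq_zero hb hb' ‹_› ?_ ?_ <;> rwa [inf_comm]

lemma nsmul_inf_eq_zero (ha : 0 ≤ a) (hb : 0 ≤ b) (hab : a ⊓ b = 0) (n : ℕ) :
    (n • a) ⊓ b = 0 := by
  induction n with
  | zero => rw [zero_nsmul, inf_eq_left.mpr hb]
  | succ n ih => rw [succ_nsmul]; exact add_inf_eq_zero (nsmul_nonneg ha n) ha hb ih hab

lemma posPart_add_of_abs_inf_abs_eq_zero (h : |a| ⊓ |b| = 0) : (a + b)⁺ = a⁺ + b⁺ := by
  have hPN : (a⁺ + b⁺) ⊓ (a⁻ + b⁻) = 0 :=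
    add_inf_add_eq_zero (posPart_nonneg a) (posPart_nonneg b) (negPart_nonneg a)
      (negPart_nonneg b) (posPart_inf_negPart_eq_zero a)
      (inf_eq_zero_of_le (posPart_nonneg a) (negPart_nonneg b) (posPart_le_abs a)
        (negPart_le_abs b) h)
      (inf_eq_zero_of_le (posPart_nonneg b) (negPart_nonneg a) (posPart_le_abs b)
        (negPart_le_abs a) (by rwa [inf_comm]))
      (posPart_inf_negPart_eq_zero b)
  rw [← posPart_sub_of_inf_eq_zero hPN]
  congr 1
  conv_lhs => rw [← posPart_sub_negPart a, ← posPart_sub_negPart b]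
  abel

lemma negPart_add_of_abs_inf_abs_eq_zero (h : |a| ⊓ |b| = 0) : (a + b)⁻ = a⁻ + b⁻ := by
  rw [← posPart_neg, neg_add, posPart_add_of_abs_inf_abs_eq_zero (by rwa [abs_neg, abs_neg]),
    posPart_neg, posPart_neg]

lemma abs_add_of_abs_inf_abs_eq_zero (h : |a| ⊓ |b| = 0) : |a + b| = |a| + |b| := by
  rw [← posPart_add_negPart, ← posPart_add_negPart a, ← posPart_add_negPart b,
    posPart_add_of_abs_inf_abs_eq_zero h, negPart_add_of_abs_inf_abs_eq_zero h]
  abel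

lemma eq_inf_add_inf_of_le (hc : 0 ≤ c) (ha : 0 ≤ a) (hb : 0 ≤ b) (hab : a ⊓ b = 0)
    (hle : c ≤ a + b) : c = c ⊓ a + c ⊓ b := by
  refine le_antisymm ?_ ?_
  · calc c = (a + b) ⊓ c := (inf_eq_right.mpr hle).symm
    _ ≤ a ⊓ c + b ⊓ c := add_inf_le_inf_add_inf ha hb hc
    _ = c ⊓ a + c ⊓ b := by rw [inf_comm a, inf_comm b]
  · have hcb : c ⊓ b = (c ⊓ b - a)⁺ :=
      (posPart_sub_of_inf_eq_zero (inf_eq_zero_of_le (le_inf hc hb) ha inf_le_right le_rfl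
        (by rwa [inf_comm]))).symm
    calc c ⊓ a + c ⊓ b ≤ c ⊓ a + (c - a)⁺ := by
          rw [hcb]; exact add_le_add_right (posPart_mono (sub_le_sub_right inf_le_left a)) _
    _ = c := by rw [← sub_inf_self]; abel

end LatticeGroup

section PartInf

variable {α : Type*} [Lattice α] [AddCommGroup α]

/-- In the Boolean algebra of fragments of an element, this is the meet. -/
def partInf (a b : α) : α := a⁺ ⊓ b⁺ - a⁻ ⊓ b⁻

lemma partInf_comm (a b : α) : partInf a b = partInf b a := by
  rw [partInf, partInf, inf_comm a⁺, inf_comm a⁻]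

variable [AddLeftMono α] {a b c : α}

lemma abs_partInf_le_left (a b : α) : |partInf a b| ≤ |a| :=
  calc |partInf a b| ≤ |a⁺ ⊓ b⁺| + |a⁻ ⊓ b⁻| := abs_sub_le_abs_add_abs _ _
  _ = a⁺ ⊓ b⁺ + a⁻ ⊓ b⁻ := by
      rw [abs_of_nonneg (le_inf (posPart_nonneg a) (posPart_nonneg b)),
        abs_of_nonneg (le_inf (negPart_nonneg a) (negPart_nonneg b))]
  _ ≤ a⁺ + a⁻ := add_le_add inf_le_left inf_le_left
  _ = |a| := posPart_add_negPart a

lemma abs_partInf_le_right (a b : α) : |partInf a b| ≤ |b| :=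
  partInf_comm a b ▸ abs_partInf_le_left b a

lemma eq_partInf_add_partInf {d : α} (hab : |a| ⊓ |b| = 0) (hcd : |c| ⊓ |d| = 0)
    (h : a + b = c + d) : a = partInf a c + partInf a d := by
  have hpos : a⁺ ≤ c⁺ + d⁺ := by
    rw [← posPart_add_of_abs_inf_abs_eq_zero hcd, ← h, posPart_add_of_abs_inf_abs_eq_zero hab]
    exact le_add_of_nonneg_right (posPart_nonneg b)
  have hneg : a⁻ ≤ c⁻ + d⁻ := by
    rw [← negPart_add_of_abs_inf_abs_eq_zero hcd, ← h, negPart_add_of_abs_inf_abs_eq_zero hab]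
    exact le_add_of_nonneg_right (negPart_nonneg b)
  have hcdPos : c⁺ ⊓ d⁺ = 0 :=
    inf_eq_zero_of_le (posPart_nonneg c) (posPart_nonneg d) (posPart_le_abs c)
      (posPart_le_abs d) hcd
  have hcdNeg : c⁻ ⊓ d⁻ = 0 :=
    inf_eq_zero_of_le (negPart_nonneg c) (negPart_nonneg d) (negPart_le_abs c)
      (negPart_le_abs d) hcd
  conv_lhs => rw [← posPart_sub_negPart a,
    eq_inf_add_inf_of_le (posPart_nonneg a) (posPart_nonneg c) (posPart_nonneg d) hcdPos hpos,
    eq_inf_add_inf_of_le (negPart_nonneg a) (negPart_nonneg c) (negPart_nonneg d) hcdNeg hneg]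
  rw [partInf, partInf]
  abel

end PartInf

section Fragment

variable {E : Type*} [Lattice E] [AddCommGroup E] [AddLeftMono E] {f g x y : E}

lemma fragment_zero (x : E) : Fragment 0 x := by simp [Fragment]

lemma fragment_self (x : E) : Fragment x x := by simp [Fragment]

lemma Fragment.abs_add_abs_sub (hf : Fragment f x) : |f| + |x - f| = |x| := by
  rw [← abs_add_of_abs_inf_abs_eq_zero hf, add_sub_cancel]

lemma Fragment.abs_le (hf : Fragment f x) : |f| ≤ |x| :=
  hf.abs_add_abs_sub ▸ le_add_of_nonneg_right (abs_nonneg _)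

lemma Fragment.abs_sub_le (hf : Fragment f x) : |x - f| ≤ |x| :=
  hf.abs_add_abs_sub ▸ le_add_of_nonneg_left (abs_nonneg _)

lemma Fragment.add {h : E} (hxy : |x| ⊓ |y| = 0) (hf : Fragment f x) (hh : Fragment h y) :
    Fragment (f + h) (x + y) := by
  have hfh : |f| ⊓ |y - h| = 0 := abs_inf_abs_eq_zero_of_le hf.abs_le hh.abs_sub_le hxy
  have hhf : |h| ⊓ |x - f| = 0 :=
    abs_inf_abs_eq_zero_of_le hh.abs_le hf.abs_sub_le (by rwa [inf_comm])
  rw [Fragment, show x + y - (f + h) = x - f + (y - h) by abel]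
  exact abs_inf_abs_eq_zero_of_le (abs_add_le f h) (abs_add_le (x - f) (y - h)) <|
    add_inf_add_eq_zero (abs_nonneg _) (abs_nonneg _) (abs_nonneg _) (abs_nonneg _) hf hfh hhf hh

lemma Fragment.exists_split (hxy : |x| ⊓ |y| = 0) (hg : Fragment g (x + y)) :
    ∃ g₁ g₂ : E, g = g₁ + g₂ ∧ Fragment g₁ x ∧ Fragment g₂ y ∧ |g₁| ⊓ |g₂| = 0 ∧
      |x - g₁| ⊓ |y - g₂| = 0 := by
  set g' := x + y - g
  have hgg' : g + g' = x + y := add_sub_cancel g (x + y)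
  have hyx : |y| ⊓ |x| = 0 := by rwa [inf_comm]
  have hx : x - partInf g x = partInf x g' := by
    have := eq_partInf_add_partInf hxy hg hgg'.symm
    rw [partInf_comm x g] at this
    exact sub_eq_iff_eq_add'.mpr this
  have hy : y - partInf g y = partInf y g' := by
    have := eq_partInf_add_partInf hyx hg (by rw [add_comm y, hgg'])
    rw [partInf_comm y g] at this
    exact sub_eq_iff_eq_add'.mpr this
  refine ⟨partInf g x, partInf g y, eq_partInf_add_partInf hg hxy hgg', ?_, ?_, ?_, ?_⟩
  · rw [Fragment, hx]
    exact abs_inf_abs_eq_zero_of_le (abs_partInf_le_left g x) (abs_partInf_le_right x g') hg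
  · rw [Fragment, hy]
    exact abs_inf_abs_eq_zero_of_le (abs_partInf_le_left g y) (abs_partInf_le_right y g') hg
  · exact abs_inf_abs_eq_zero_of_le (abs_partInf_le_right g x) (abs_partInf_le_right g y) hxy
  · rw [hx, hy]
    exact abs_inf_abs_eq_zero_of_le (abs_partInf_le_left x g') (abs_partInf_le_left y g') hxy

end Fragment

section RealScalars

variable {α : Type*} [Lattice α] [AddCommGroup α] [AddLeftMono α] [Module ℝ α] [PosSMulMono ℝ α]

lemma smul_le_smul_of_le_of_nonneg {a b : ℝ} {x : α} (hab : a ≤ b) (hx : 0 ≤ x) :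
    a • x ≤ b • x :=
  sub_nonneg.mp (by rw [← sub_smul]; exact smul_nonneg (sub_nonneg.mpr hab) hx)

lemma exists_le_nsmul_smul {ε : ℝ} {x : α} (hε : 0 < ε) (hx : 0 ≤ x) :
    ∃ m : ℕ, x ≤ m • (ε • x) := by
  obtain ⟨m, hm⟩ := exists_nat_ge ε⁻¹
  refine ⟨m, ?_⟩
  have hmε : 1 ≤ (m : ℝ) * ε := by
    rw [← inv_mul_cancel₀ hε.ne']; exact mul_le_mul_of_nonneg_right hm hε.le
  calc x = (1 : ℝ) • x := (one_smul ℝ x).symm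
  _ ≤ ((m : ℝ) * ε) • x := smul_le_smul_of_le_of_nonneg hmε hx
  _ = m • (ε • x) := by rw [← smul_smul, Nat.cast_smul_eq_nsmul]

end RealScalars

section ConditionallyCompleteGroup

variable {α : Type*} [ConditionallyCompleteLattice α] [AddCommGroup α] [AddLeftMono α]

lemma nonpos_of_forall_nsmul_le {c v : α} (h : ∀ n : ℕ, n • v ≤ c) : v ≤ 0 := by
  have hbdd : BddAbove (Set.range fun n : ℕ => n • v) := ⟨c, Set.forall_mem_range.mpr h⟩
  have hsucc : (⨆ n : ℕ, n • v) + v ≤ ⨆ n : ℕ, n • v := by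
    rw [ciSup_add hbdd]
    exact ciSup_le fun n => succ_nsmul v n ▸ le_ciSup hbdd (n + 1)
  exact (add_le_iff_nonpos_right _).mp hsucc

lemma le_of_forall_pos_le_add_smul [Module ℝ α] [PosSMulMono ℝ α] {a b c : α} (hc : 0 ≤ c)
    (h : ∀ δ : ℝ, 0 < δ → a ≤ b + δ • c) : a ≤ b := by
  refine sub_nonpos.mp (nonpos_of_forall_nsmul_le (c := c) fun k => ?_)
  rcases k.eq_zero_or_pos with rfl | hk
  · simpa using hc
  · have hk' : (0 : ℝ) < k := Nat.cast_pos.mpr hk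
    calc k • (a - b) = (k : ℝ) • (a - b) := (Nat.cast_smul_eq_nsmul ℝ k _).symm
    _ ≤ (k : ℝ) • ((k : ℝ)⁻¹ • c) :=
        smul_le_smul_of_nonneg_left (sub_le_iff_le_add'.mpr (h _ (inv_pos.mpr hk'))) hk'.le
    _ = c := smul_inv_smul₀ hk'.ne' c

lemma ciSup_inf_le {ι : Type*} [Nonempty ι] {f : ι → α} (hf : BddAbove (Set.range f)) (z : α) :
    (⨆ i, f i) ⊓ z ≤ ⨆ i, f i ⊓ z := by
  have hbdd : BddAbove (Set.range fun i => f i ⊓ z) :=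
    ⟨z, Set.forall_mem_range.mpr fun i => inf_le_right⟩
  have key : (⨆ i, f i) ≤ (⨆ i, f i ⊓ z) + ((⨆ i, f i) ⊔ z) - z := by
    refine ciSup_le fun i => ?_
    calc f i = f i ⊓ z + f i ⊔ z - z := by rw [inf_add_sup, add_sub_cancel_right]
    _ ≤ (⨆ i, f i ⊓ z) + ((⨆ i, f i) ⊔ z) - z := by
        gcongr
        · exact le_ciSup hbdd i
        · exact le_ciSup hf i
  calc (⨆ i, f i) ⊓ z = (⨆ i, f i) + z - (⨆ i, f i) ⊔ z := by
        rw [← inf_add_sup, add_sub_cancel_right]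
  _ ≤ ⨆ i, f i ⊓ z := by
      rw [sub_le_iff_le_add]
      calc (⨆ i, f i) + z ≤ (⨆ i, f i ⊓ z) + ((⨆ i, f i) ⊔ z) - z + z := by gcongr
      _ = _ := by abel

lemma ciSup_add_ciSup_of_monotone {ι : Type*} [SemilatticeSup ι] [Nonempty ι] {f g : ι → α}
    (hf : Monotone f) (hg : Monotone g) (hbf : BddAbove (Set.range f))
    (hbg : BddAbove (Set.range g)) : ⨆ i, (f i + g i) = (⨆ i, f i) + ⨆ i, g i := by
  refine le_antisymm (ciSup_le fun i => add_le_add (le_ciSup hbf i) (le_ciSup hbg i)) ?_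
  have hbdd : BddAbove (Set.range fun i => f i + g i) := by
    obtain ⟨a, ha⟩ := hbf
    obtain ⟨b, hb⟩ := hbg
    exact ⟨a + b, Set.forall_mem_range.mpr fun i =>
      add_le_add (ha (Set.mem_range_self i)) (hb (Set.mem_range_self i))⟩
  rw [ciSup_add hbf]
  refine ciSup_le fun i => ?_
  rw [add_ciSup hbg]
  exact ciSup_le fun j => (add_le_add (hf le_sup_left) (hg le_sup_right)).trans
    (le_ciSup hbdd (i ⊔ j))

end ConditionallyCompleteGroup

section PrincipalProj

variable {α : Type*} [ConditionallyCompleteLattice α] [AddCommGroup α]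

/-- `principalProj u x` is the projection of `x ≥ 0` onto the band generated by `u ≥ 0`. -/
noncomputable def principalProj (u x : α) : α := ⨆ n : ℕ, x ⊓ n • u

variable {u v x y : α}

lemma bddAbove_range_inf_nsmul (u x : α) : BddAbove (Set.range fun n : ℕ => x ⊓ n • u) :=
  ⟨x, Set.forall_mem_range.mpr fun _ => inf_le_left⟩

lemma inf_nsmul_le_principalProj (u x : α) (n : ℕ) : x ⊓ n • u ≤ principalProj u x :=
  le_ciSup (bddAbove_range_inf_nsmul u x) n

lemma principalProj_le (u x : α) : principalProj u x ≤ x :=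
  ciSup_le fun _ => inf_le_left

lemma principalProj_nonneg (u : α) (hx : 0 ≤ x) : 0 ≤ principalProj u x := by
  simpa [inf_eq_right.mpr hx] using inf_nsmul_le_principalProj u x 0

lemma principalProj_zero (u : α) : principalProj u 0 = 0 :=
  le_antisymm (principalProj_le u 0) (principalProj_nonneg u le_rfl)

lemma principalProj_mono (u : α) (hxy : x ≤ y) : principalProj u x ≤ principalProj u y :=
  ciSup_mono (bddAbove_range_inf_nsmul u y) fun _ => inf_le_inf_right _ hxy

lemma le_principalProj_of_le (h : u ≤ x) : u ≤ principalProj u x := by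
  simpa [inf_eq_right.mpr h] using inf_nsmul_le_principalProj u x 1

variable [AddLeftMono α]

lemma principalProj_add (hu : 0 ≤ u) (hx : 0 ≤ x) (hy : 0 ≤ y) :
    principalProj u (x + y) = principalProj u x + principalProj u y := by
  have hmono : ∀ z : α, Monotone fun n : ℕ => z ⊓ n • u := fun z _ _ hnm =>
    inf_le_inf_left z (nsmul_le_nsmul_left hu hnm)
  rw [principalProj, principalProj, principalProj, ← ciSup_add_ciSup_of_monotone (hmono x)
    (hmono y) (bddAbove_range_inf_nsmul u x) (bddAbove_range_inf_nsmul u y)]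
  refine le_antisymm (ciSup_mono ?_ fun n => add_inf_le_inf_add_inf hx hy (nsmul_nonneg hu n))
    (ciSup_le fun n => ?_)
  · exact ⟨x + y, Set.forall_mem_range.mpr fun n => add_le_add inf_le_left inf_le_left⟩
  · refine le_trans ?_ (inf_nsmul_le_principalProj u (x + y) (n + n))
    rw [add_nsmul]
    exact le_inf (add_le_add inf_le_left inf_le_left) (add_le_add inf_le_right inf_le_right)

lemma principalProj_principalProj_of_le_nsmul {m : ℕ} (hvu : v ≤ m • u) (x : α) :
    principalProj u (principalProj v x) = principalProj v x := by
  refine le_antisymm (principalProj_le u _) (ciSup_le fun k => ?_)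
  refine le_trans (le_inf (inf_nsmul_le_principalProj v x k) ?_)
    (inf_nsmul_le_principalProj u _ (k * m))
  calc x ⊓ k • v ≤ k • v := inf_le_right
  _ ≤ k • m • u := nsmul_le_nsmul_right hvu k
  _ = (k * m) • u := (mul_nsmul' u k m).symm

lemma principalProj_idem (u x : α) : principalProj u (principalProj u x) = principalProj u x :=
  principalProj_principalProj_of_le_nsmul (one_nsmul u).ge x

lemma principalProj_le_principalProj_of_le_nsmul {m : ℕ} (hvu : v ≤ m • u) (hxy : x ≤ y) :
    principalProj v x ≤ principalProj u y :=
  calc principalProj v x = principalProj u (principalProj v x) :=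
        (principalProj_principalProj_of_le_nsmul hvu x).symm
  _ ≤ principalProj u y := principalProj_mono u ((principalProj_le v x).trans hxy)

lemma principalProj_inf_eq_zero (hu : 0 ≤ u) (hv : 0 ≤ v) (huv : u ⊓ v = 0) (hx : 0 ≤ x) :
    principalProj u x ⊓ v = 0 := by
  refine le_antisymm ((ciSup_inf_le (bddAbove_range_inf_nsmul u x) v).trans (ciSup_le fun n => ?_))
    (le_inf (principalProj_nonneg u hx) hv)
  exact (inf_le_inf_right v inf_le_right).trans (nsmul_inf_eq_zero hu hv huv n).le

lemma principalProj_posPart_sub_le {s g : α} (hs : 0 ≤ s) (hx : 0 ≤ x)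
    (hg : principalProj (s - u)⁺ x ≤ g) (n : ℕ) :
    principalProj (s - u)⁺ x ≤ n • s + (g - n • u)⁺ := by
  set r := principalProj (s - u)⁺ x
  have hr : 0 ≤ r := principalProj_nonneg _ hx
  have hrv : r ⊓ (u - s)⁺ = 0 := by
    refine principalProj_inf_eq_zero (posPart_nonneg _) (posPart_nonneg _) ?_ hx
    simpa [← posPart_neg] using posPart_inf_negPart_eq_zero (s - u)
  have hrnv : r ⊓ n • (u - s)⁺ = 0 := by
    rw [inf_comm]; exact nsmul_inf_eq_zero (posPart_nonneg _) hr (by rwa [inf_comm]) n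
  have hnu : n • u ≤ n • s + n • (u - s)⁺ := by
    rw [← nsmul_add]
    exact nsmul_le_nsmul_right (le_add_of_sub_left_le (le_posPart _)) n
  -- `r` lies in the band of `(s - u)⁺`, which is disjoint from `(u - s)⁺ ≥ u - s`
  have hinf : r ⊓ n • u ≤ n • s :=
    calc r ⊓ n • u ≤ (n • s + n • (u - s)⁺) ⊓ r := inf_comm r _ ▸ inf_le_inf_left r hnu
    _ ≤ n • s ⊓ r + n • (u - s)⁺ ⊓ r :=
        add_inf_le_inf_add_inf (nsmul_nonneg hs n) (nsmul_nonneg (posPart_nonneg _) n) hr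
    _ = n • s ⊓ r := by rw [inf_comm (n • (u - s)⁺) r, hrnv, add_zero]
    _ ≤ n • s := inf_le_left
  calc r = r ⊓ n • u + (r - n • u)⁺ := (inf_add_posPart_sub r _).symm
  _ ≤ n • s + (g - n • u)⁺ := add_le_add hinf (posPart_mono (sub_le_sub_right hg _))

lemma nonpos_of_forall_le_posPart_sub_nsmul {d : α} (hg : principalProj u y = y)
    (h : ∀ n : ℕ, d ≤ (y - n • u)⁺) : d ≤ 0 := by
  have hle : principalProj u y ≤ y - d :=
    ciSup_le fun n => by rw [le_sub_comm, sub_inf_self]; exact h n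
  rw [hg] at hle
  simpa using hle

end PrincipalProj

section BandProj

variable {α : Type*} [ConditionallyCompleteLattice α] [AddCommGroup α] [AddLeftMono α] {u : α}

noncomputable def bandProj (u x : α) : α := principalProj u x⁺ - principalProj u x⁻

lemma bandProj_of_nonneg {x : α} (hx : 0 ≤ x) : bandProj u x = principalProj u x := by
  rw [bandProj, posPart_eq_self.mpr hx, negPart_eq_zero.mpr hx, principalProj_zero, sub_zero]

lemma bandProj_add (hu : 0 ≤ u) (x y : α) : bandProj u (x + y) = bandProj u x + bandProj u y := by
  have h : (x + y)⁺ + (x⁻ + y⁻) = (x⁺ + y⁺) + (x + y)⁻ := by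
    rw [← sub_eq_sub_iff_add_eq_add, posPart_sub_negPart, add_sub_add_comm, posPart_sub_negPart,
      posPart_sub_negPart]
  have hP := congrArg (principalProj u) h
  simp only [principalProj_add hu, posPart_nonneg, negPart_nonneg, add_nonneg] at hP
  simp only [bandProj]
  rw [sub_add_sub_comm, sub_eq_sub_iff_add_eq_add]
  exact hP

lemma bandProj_sub (hu : 0 ≤ u) (x y : α) : bandProj u (x - y) = bandProj u x - bandProj u y :=
  eq_sub_of_add_eq (by rw [← bandProj_add hu, sub_add_cancel])

lemma bandProj_idem (hu : 0 ≤ u) (x : α) : bandProj u (bandProj u x) = bandProj u x := by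
  have hx : bandProj u x = principalProj u x⁺ - principalProj u x⁻ := rfl
  rw [hx, bandProj_sub hu, bandProj_of_nonneg (principalProj_nonneg u (posPart_nonneg x)),
    bandProj_of_nonneg (principalProj_nonneg u (negPart_nonneg x)), principalProj_idem,
    principalProj_idem]

lemma isBandProj_sub_bandProj (hu : 0 ≤ u) : IsBandProj fun x => x - bandProj u x := by
  refine ⟨fun x y => ?_, fun x => ?_, fun x hx => ?_⟩
  · dsimp only
    rw [bandProj_add hu]; abel
  · dsimp only
    rw [bandProj_sub hu, bandProj_idem hu, sub_self, sub_zero]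
  · dsimp only
    rw [bandProj_of_nonneg hx]
    exact ⟨sub_nonneg.mpr (principalProj_le u x), sub_le_self x (principalProj_nonneg u hx)⟩

end BandProj

namespace IsBandProj

variable {α : Type*} [Lattice α] [AddCommGroup α] {ρ : α → α}

lemma map_zero (hρ : IsBandProj ρ) : ρ 0 = 0 := by
  simpa using hρ.1 0 0

lemma map_sub (hρ : IsBandProj ρ) (a b : α) : ρ (a - b) = ρ a - ρ b :=
  eq_sub_of_add_eq (by rw [← hρ.1, sub_add_cancel])

lemma map_nsmul (hρ : IsBandProj ρ) (a : α) (n : ℕ) : ρ (n • a) = n • ρ a := by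
  induction n with
  | zero => simpa using hρ.map_zero
  | succ n ih => rw [succ_nsmul, succ_nsmul, hρ.1, ih]

lemma monotone [AddLeftMono α] (hρ : IsBandProj ρ) : Monotone ρ := fun a b hab => by
  simpa [hρ.map_sub] using (hρ.2.2 (b - a) (sub_nonneg.mpr hab)).1

lemma le_apply_add_posPart [AddLeftMono α] (hρ : IsBandProj ρ) (a b : α) : ρ a ≤ ρ b + (a - b)⁺ :=
  calc ρ a = ρ (a ⊓ b) + ρ (a - b)⁺ := by rw [← hρ.1, inf_add_posPart_sub]
  _ ≤ ρ b + (a - b)⁺ := add_le_add (hρ.monotone inf_le_right) (hρ.2.2 _ (posPart_nonneg _)).2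

end IsBandProj

lemma OrderBoundedMap.of_nonneg_of_le {E F : Type*} [Preorder E] [Preorder F] [Zero F]
    {G H : E → F} (hH : OrderBoundedMap H) (hG : ∀ x, 0 ≤ G x)
    (hGH : ∀ x, G x ≤ H x) : OrderBoundedMap G := fun a b => by
  obtain ⟨_, d, hd⟩ := hH a b
  exact ⟨0, d, fun x hx => ⟨hG x, (hGH x).trans (hd x hx).2⟩⟩

section Uryson

variable {E F : Type*} [Lattice E] [AddCommGroup E]

lemma OrthAdd.map_zero [AddLeftMono E] [AddCommGroup F] {A : E → F} (hA : OrthAdd A) : A 0 = 0 := by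
  simpa using hA 0 0 (by simp)

lemma OrthAdd.apply_eq_of_fragment [AddCommGroup F] {A : E → F} (hA : OrthAdd A) {f x : E}
    (hf : Fragment f x) : A x = A f + A (x - f) := by
  rw [← hA f (x - f) hf, add_sub_cancel]

lemma OrthAdd.nsmul [AddCommGroup F] {S : E → F} (hS : OrthAdd S) (n : ℕ) :
    OrthAdd fun x => n • S x := fun x y hxy => by simp only [hS x y hxy, nsmul_add]

lemma OrthAdd.ciSup_of_monotone [ConditionallyCompleteLattice F] [AddCommGroup F] [AddLeftMono F]
    {R : ℕ → E → F} (hR : ∀ n, OrthAdd (R n))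
    (hmono : ∀ x, Monotone fun n => R n x) (hbdd : ∀ x, BddAbove (Set.range fun n => R n x)) :
    OrthAdd fun x => ⨆ n, R n x := fun x y hxy => by
  simp only [hR _ x y hxy]
  exact ciSup_add_ciSup_of_monotone (hmono x) (hmono y) (hbdd x) (hbdd y)

lemma bddBelow_range_fragment [Preorder F] [AddCommGroup F] [AddLeftMono F] {A B : E → F}
    (hA : ∀ x, 0 ≤ A x) (hB : ∀ x, 0 ≤ B x) (x : E) :
    BddBelow (Set.range fun f : {f : E // Fragment f x} => A f + B (x - f)) :=
  ⟨0, Set.forall_mem_range.mpr fun _ => add_nonneg (hA _) (hB _)⟩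

variable [ConditionallyCompleteLattice F] [AddCommGroup F]

/-- For positive Uryson operators `A, B` this is the lattice infimum `(A ⊓ B) x` in `U(E,F)`. -/
noncomputable def urysonInf (A B : E → F) (x : E) : F :=
  ⨅ f : {f : E // Fragment f x}, A f + B (x - f)

variable {A B : E → F} {x : E}

lemma urysonInf_le [AddLeftMono F] (hA : ∀ x, 0 ≤ A x) (hB : ∀ x, 0 ≤ B x) {f : E}
    (hf : Fragment f x) :
    urysonInf A B x ≤ A f + B (x - f) :=
  ciInf_le (bddBelow_range_fragment hA hB x) ⟨f, hf⟩

variable [AddLeftMono E]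

instance (x : E) : Nonempty {f : E // Fragment f x} := ⟨⟨0, fragment_zero x⟩⟩

lemma le_urysonInf {c : F} (h : ∀ f, Fragment f x → c ≤ A f + B (x - f)) :
    c ≤ urysonInf A B x :=
  le_ciInf fun f => h f f.2

variable [AddLeftMono F]

lemma urysonInf_nonneg (hA : ∀ x, 0 ≤ A x) (hB : ∀ x, 0 ≤ B x) (x : E) : 0 ≤ urysonInf A B x :=
  le_urysonInf fun _ _ => add_nonneg (hA _) (hB _)

lemma urysonInf_le_left (hA : ∀ x, 0 ≤ A x) (hB : ∀ x, 0 ≤ B x) (hB' : OrthAdd B) (x : E) :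
    urysonInf A B x ≤ A x := by
  simpa [hB'.map_zero] using urysonInf_le hA hB (fragment_self x)

lemma urysonInf_le_right (hA : ∀ x, 0 ≤ A x) (hB : ∀ x, 0 ≤ B x) (hA' : OrthAdd A) (x : E) :
    urysonInf A B x ≤ B x := by
  simpa [hA'.map_zero] using urysonInf_le hA hB (fragment_zero x)

lemma urysonInf_mono_right {B' : E → F} (hA : ∀ x, 0 ≤ A x) (hB : ∀ x, 0 ≤ B x)
    (hBB' : ∀ x, B x ≤ B' x) (x : E) : urysonInf A B x ≤ urysonInf A B' x :=
  le_urysonInf fun _ hf => (urysonInf_le hA hB hf).trans (add_le_add_right (hBB' _) _)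

lemma orthAdd_urysonInf (hA' : OrthAdd A) (hB' : OrthAdd B) (hA : ∀ x, 0 ≤ A x)
    (hB : ∀ x, 0 ≤ B x) : OrthAdd (urysonInf A B) := by
  intro x y hxy
  refine le_antisymm ?_ ?_
  · rw [urysonInf, urysonInf, urysonInf, ciInf_add (bddBelow_range_fragment hA hB x)]
    refine le_ciInf fun f => ?_
    rw [add_ciInf (bddBelow_range_fragment hA hB y)]
    refine le_ciInf fun h => (urysonInf_le hA hB (f.2.add hxy h.2)).trans_eq ?_
    have hfh : |(f : E)| ⊓ |(h : E)| = 0 :=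
      abs_inf_abs_eq_zero_of_le f.2.abs_le h.2.abs_le hxy
    have hfh' : |x - f| ⊓ |y - h| = 0 :=
      abs_inf_abs_eq_zero_of_le f.2.abs_sub_le h.2.abs_sub_le hxy
    rw [hA' _ _ hfh, show x + y - (f + h) = x - f + (y - h) by abel, hB' _ _ hfh']
    abel
  · refine le_urysonInf fun g hg => ?_
    obtain ⟨g₁, g₂, rfl, hg₁, hg₂, hg₁₂, hg₁₂'⟩ := hg.exists_split hxy
    calc urysonInf A B x + urysonInf A B y
        ≤ (A g₁ + B (x - g₁)) + (A g₂ + B (y - g₂)) :=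
          add_le_add (urysonInf_le hA hB hg₁) (urysonInf_le hA hB hg₂)
    _ = A (g₁ + g₂) + B (x + y - (g₁ + g₂)) := by
        rw [hA' _ _ hg₁₂, show x + y - (g₁ + g₂) = x - g₁ + (y - g₂) by abel, hB' _ _ hg₁₂']
        abel

end Uryson

section UDisjoint

variable {E F : Type*} [Lattice E] [AddCommGroup E] [AddLeftMono E]
  [ConditionallyCompleteLattice F] [AddCommGroup F] [AddLeftMono F] {G R S : E → F}

/-- `(G ⊓ n S) / n` is a Uryson operator below both `G` and `S`. -/
lemma urysonInf_nsmul_nonpos [Module ℝ F] [PosSMulMono ℝ F] (hG : OrthAdd G)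
    (hGpos : ∀ x, 0 ≤ G x) (hS : Uryson S) (hSpos : ∀ x, 0 ≤ S x) (hGS : UDisjointPos G S)
    (n : ℕ) (x : E) : urysonInf G (fun z => n • S z) x ≤ 0 := by
  have hnS : ∀ z, 0 ≤ n • S z := fun z => nsmul_nonneg (hSpos z) n
  rcases n.eq_zero_or_pos with rfl | hn
  · simpa using urysonInf_le_right hGpos hnS hG x
  set Φ := urysonInf G fun z => n • S z
  have hn' : (0 : ℝ) < n := Nat.cast_pos.mpr hn
  have hΦpos : ∀ z, 0 ≤ Φ z := urysonInf_nonneg hGpos hnS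
  have hΦS : ∀ z, (n : ℝ)⁻¹ • Φ z ≤ S z := fun z =>
    calc (n : ℝ)⁻¹ • Φ z ≤ (n : ℝ)⁻¹ • (n • S z) :=
          smul_le_smul_of_nonneg_left (urysonInf_le_right hGpos hnS hG z) (inv_nonneg.mpr hn'.le)
    _ = S z := by rw [← Nat.cast_smul_eq_nsmul ℝ, inv_smul_smul₀ hn'.ne']
  have hΦG : ∀ z, (n : ℝ)⁻¹ • Φ z ≤ G z := fun z =>
    calc (n : ℝ)⁻¹ • Φ z ≤ (1 : ℝ) • Φ z :=
          smul_le_smul_of_le_of_nonneg (inv_le_one_of_one_le₀ (Nat.one_le_cast.mpr hn)) (hΦpos z)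
    _ ≤ G z := (one_smul ℝ (Φ z)).symm ▸ urysonInf_le_left hGpos hnS (hS.1.nsmul n) z
  have hΦ : OrthAdd Φ := orthAdd_urysonInf hG (hS.1.nsmul n) hGpos hnS
  have hU : Uryson fun z => (n : ℝ)⁻¹ • Φ z :=
    ⟨fun a b hab => by simp only [hΦ a b hab, smul_add],
      hS.2.of_nonneg_of_le (fun z => smul_nonneg (inv_nonneg.mpr hn'.le) (hΦpos z)) hΦS⟩
  calc Φ x = (n : ℝ) • ((n : ℝ)⁻¹ • Φ x) := (smul_inv_smul₀ hn'.ne' _).symm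
  _ ≤ 0 := smul_nonpos_of_nonneg_of_nonpos hn'.le (hGS _ hU hΦG hΦS x)

lemma monotone_urysonInf_nsmul (hRpos : ∀ x, 0 ≤ R x) (hSpos : ∀ x, 0 ≤ S x) (x : E) :
    Monotone fun n : ℕ => urysonInf R (fun z => n • S z) x := fun _ _ hmn =>
  urysonInf_mono_right hRpos (fun z => nsmul_nonneg (hSpos z) _)
    (fun z => nsmul_le_nsmul_left (hSpos z) hmn) x

lemma bddAbove_range_urysonInf_nsmul (hRpos : ∀ x, 0 ≤ R x) (hS : OrthAdd S)
    (hSpos : ∀ x, 0 ≤ S x) (x : E) :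
    BddAbove (Set.range fun n : ℕ => urysonInf R (fun z => n • S z) x) :=
  ⟨R x, Set.forall_mem_range.mpr fun n =>
    urysonInf_le_left hRpos (fun z => nsmul_nonneg (hSpos z) n) (hS.nsmul n) x⟩

/-- With `Φₙ = R ⊓ n S`: if `U ≤ R - sup Φₙ` and `U ≤ S`, then `U ≤ R - Φₙ` on every fragment,
whence `Φₙ + U ≤ Φₙ₊₁` and so `n U ≤ R` for all `n`. -/
lemma uDisjointPos_sub_iSup_urysonInf_nsmul (hR : OrthAdd R) (hRpos : ∀ x, 0 ≤ R x)
    (hS : OrthAdd S) (hSpos : ∀ x, 0 ≤ S x) :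
    UDisjointPos (fun x => R x - ⨆ n : ℕ, urysonInf R (fun z => n • S z) x) S := by
  intro U hU hUR hUS x
  set Φ : ℕ → E → F := fun n => urysonInf R fun z => n • S z
  have hnS : ∀ (n : ℕ) z, 0 ≤ n • S z := fun n z => nsmul_nonneg (hSpos z) n
  have hstep : ∀ n : ℕ, Φ n x + U x ≤ Φ (n + 1) x := by
    intro n
    refine le_urysonInf fun f hf => ?_
    have hUf : U f ≤ R f - Φ n f :=
      (hUR f).trans <| sub_le_sub_left
        (le_ciSup (bddAbove_range_urysonInf_nsmul hRpos hS hSpos f) n) _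
    calc Φ n x + U x = (Φ n f + Φ n (x - f)) + (U f + U (x - f)) := by
          rw [← (orthAdd_urysonInf hR (hS.nsmul n) hRpos (hnS n)).apply_eq_of_fragment hf,
            ← hU.1.apply_eq_of_fragment hf]
    _ ≤ (Φ n f + n • S (x - f)) + ((R f - Φ n f) + S (x - f)) :=
          add_le_add (add_le_add_right (urysonInf_le_right hRpos (hnS n) hR _) _)
            (add_le_add hUf (hUS _))
    _ = R f + (n + 1) • S (x - f) := by rw [succ_nsmul]; abel
  have hbound : ∀ n : ℕ, Φ 0 x + n • U x ≤ Φ n x := by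
    intro n
    induction n with
    | zero => simp
    | succ n ih => rw [succ_nsmul, ← add_assoc]; exact (add_le_add ih le_rfl).trans (hstep n)
  refine nonpos_of_forall_nsmul_le (c := R x) fun n => ?_
  calc n • U x ≤ Φ 0 x + n • U x := le_add_of_nonneg_left (urysonInf_nonneg hRpos (hnS 0) x)
  _ ≤ R x := (hbound n).trans (urysonInf_le_left hRpos (hnS n) (hS.nsmul n) x)

lemma eq_iSup_urysonInf_nsmul (hR : Uryson R) (hRpos : ∀ x, 0 ≤ R x) (hS : OrthAdd S)
    (hSpos : ∀ x, 0 ≤ S x)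
    (hRband : ∀ U : E → F, Uryson U → (∀ x, 0 ≤ U x) → UDisjointPos U S → UDisjointPos R U)
    (x : E) : R x = ⨆ n : ℕ, urysonInf R (fun z => n • S z) x := by
  set D := fun x => R x - ⨆ n : ℕ, urysonInf R (fun z => n • S z) x
  have hDpos : ∀ x, 0 ≤ D x := fun x => sub_nonneg.mpr <| ciSup_le fun n =>
    urysonInf_le_left hRpos (fun z => nsmul_nonneg (hSpos z) n) (hS.nsmul n) x
  have hDR : ∀ x, D x ≤ R x := fun x => sub_le_self _ <|
    le_ciSup_of_le (bddAbove_range_urysonInf_nsmul hRpos hS hSpos x) 0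
      (urysonInf_nonneg hRpos (fun z => nsmul_nonneg (hSpos z) 0) x)
  have hsup : OrthAdd fun x => ⨆ n : ℕ, urysonInf R (fun z => n • S z) x :=
    OrthAdd.ciSup_of_monotone (fun n => orthAdd_urysonInf hR.1 (hS.nsmul n) hRpos
      (fun z => nsmul_nonneg (hSpos z) n)) (monotone_urysonInf_nsmul hRpos hSpos)
      (bddAbove_range_urysonInf_nsmul hRpos hS hSpos)
  have hD : Uryson D :=
    ⟨fun a b hab => by simp only [D, hR.1 a b hab, hsup a b hab]; abel,
      hR.2.of_nonneg_of_le hDpos hDR⟩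
  have hDx : D x ≤ 0 :=
    hRband D hD hDpos (uDisjointPos_sub_iSup_urysonInf_nsmul hR.1 hRpos hS hSpos)
    D hD hDR (fun _ => le_rfl) x
  exact sub_eq_zero.mp (le_antisymm hDx (hDpos x))

end UDisjoint

section BandFormula

variable {E F : Type*} [Lattice E] [AddCommGroup E]
  [ConditionallyCompleteLattice F] [AddCommGroup F] [Module ℝ F]
  {R S T : E → F} {e : E} {ε : ℝ}

def admissibleSums (S T : E → F) (e : E) (ε : ℝ) : Set F :=
  {w : F | ∃ (ρ : F → F) (f : E), IsBandProj ρ ∧ Fragment f e ∧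
    ρ (S (e - f)) ≤ ε • S e ∧ w = ρ (T f) + (T e - ρ (T e))}

def admissibleInfs (S T : E → F) (e : E) : Set F :=
  {v : F | ∃ ε : ℝ, 0 < ε ∧ v = sInf (admissibleSums S T e ε)}

lemma bddBelow_admissibleSums [AddLeftMono F] (hTpos : ∀ x, 0 ≤ T x) :
    BddBelow (admissibleSums S T e ε) :=
  ⟨0, by
    rintro _ ⟨ρ, f, hρ, -, -, rfl⟩
    exact add_nonneg (hρ.2.2 _ (hTpos f)).1 (sub_nonneg.mpr (hρ.2.2 _ (hTpos e)).2)⟩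

lemma mem_admissibleSums_of_fragment [AddLeftMono F] [PosSMulMono ℝ F] (hSpos : ∀ x, 0 ≤ S x)
    (hT : OrthAdd T) (hTpos : ∀ x, 0 ≤ T x) (hε : 0 ≤ ε) {f : E} (hf : Fragment f e) :
    T f + principalProj (S (e - f) - ε • S e)⁺ (T (e - f)) ∈ admissibleSums S T e ε := by
  set uf := (S (e - f) - ε • S e)⁺
  have huf : uf ≤ S (e - f) := sup_le (sub_le_self _ (smul_nonneg hε (hSpos e))) (hSpos _)
  refine ⟨fun y => y - bandProj uf y, f, isBandProj_sub_bandProj (posPart_nonneg _), hf, ?_, ?_⟩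
  · dsimp only
    rw [bandProj_of_nonneg (hSpos _), sub_le_comm]
    exact (le_posPart _).trans (le_principalProj_of_le huf)
  · dsimp only
    rw [hT.apply_eq_of_fragment hf, bandProj_add (posPart_nonneg _),
      bandProj_of_nonneg (hTpos (e - f))]
    abel

lemma self_mem_admissibleSums [AddLeftMono E] [PosSMulMono ℝ F] (hS : OrthAdd S)
    (hSpos : ∀ x, 0 ≤ S x) (hε : 0 ≤ ε) : T e ∈ admissibleSums S T e ε :=
  ⟨id, e, ⟨fun _ _ => rfl, fun _ => rfl, fun _ hx => ⟨hx, le_rfl⟩⟩, fragment_self e,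
    by simpa [hS.map_zero] using smul_nonneg hε (hSpos e), by simp⟩

lemma sInf_admissibleSums_le_of_fragment [AddLeftMono F] [PosSMulMono ℝ F] (hS : OrthAdd S)
    (hSpos : ∀ x, 0 ≤ S x) (hT : OrthAdd T) (hTpos : ∀ x, 0 ≤ T x) (hR : OrthAdd R)
    (hRpos : ∀ x, 0 ≤ R x) (hRT : ∀ x, R x ≤ T x) (hε : 0 < ε) {f : E} (hf : Fragment f e)
    (n : ℕ) :
    sInf (admissibleSums S T e ε) ≤ (T f - R f + n • S (e - f)) +
      (R e + (principalProj (ε • S e) (T e - R e) - n • (ε • S e))⁺) := by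
  set uf := (S (e - f) - ε • S e)⁺
  have hG : ∀ x, 0 ≤ T x - R x := fun x => sub_nonneg.mpr (hRT x)
  have hr : principalProj uf (T (e - f) - R (e - f)) ≤ principalProj (ε • S e) (T e - R e) := by
    obtain ⟨m, hm⟩ := exists_le_nsmul_smul hε (hSpos e)
    refine principalProj_le_principalProj_of_le_nsmul (m := m) ?_ ?_
    · calc uf ≤ S (e - f) := sup_le (sub_le_self _ (smul_nonneg hε.le (hSpos e))) (hSpos _)
      _ ≤ S e := hS.apply_eq_of_fragment hf ▸ le_add_of_nonneg_left (hSpos f)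
      _ ≤ m • (ε • S e) := hm
    · rw [hT.apply_eq_of_fragment hf, hR.apply_eq_of_fragment hf]
      calc T (e - f) - R (e - f) ≤ (T f - R f) + (T (e - f) - R (e - f)) :=
            le_add_of_nonneg_left (hG f)
      _ = _ := by abel
  calc sInf (admissibleSums S T e ε) ≤ T f + principalProj uf (T (e - f)) :=
        csInf_le (bddBelow_admissibleSums hTpos)
          (mem_admissibleSums_of_fragment hSpos hT hTpos hε.le hf)
  _ = T f + (principalProj uf (R (e - f)) + principalProj uf (T (e - f) - R (e - f))) := by
        rw [← principalProj_add (posPart_nonneg _) (hRpos _) (hG _), add_sub_cancel]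
  _ ≤ T f + (R (e - f) + (n • S (e - f) +
        (principalProj (ε • S e) (T e - R e) - n • (ε • S e))⁺)) :=
        add_le_add_right (add_le_add (principalProj_le _ _)
          (principalProj_posPart_sub_le (hSpos _) (hG _) hr n)) _
  _ = _ := by rw [hR.apply_eq_of_fragment hf]; abel

variable [AddLeftMono E] [AddLeftMono F]

lemma bddAbove_admissibleInfs [PosSMulMono ℝ F] (hS : OrthAdd S) (hSpos : ∀ x, 0 ≤ S x)
    (hTpos : ∀ x, 0 ≤ T x) : BddAbove (admissibleInfs S T e) :=
  ⟨T e, by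
    rintro _ ⟨ε, hε, rfl⟩
    exact csInf_le (bddBelow_admissibleSums hTpos) (self_mem_admissibleSums hS hSpos hε.le)⟩

lemma urysonInf_nsmul_sub_le_of_mem_admissibleSums (hR : OrthAdd R) (hRpos : ∀ x, 0 ≤ R x)
    (hS : OrthAdd S) (hSpos : ∀ x, 0 ≤ S x) (hT : OrthAdd T) (hRT : ∀ x, R x ≤ T x) (n : ℕ)
    {w : F} (hw : w ∈ admissibleSums S T e ε) :
    urysonInf R (fun z => n • S z) e - n • (ε • S e) ≤ w := by
  obtain ⟨ρ, f, hρ, hf, hρS, rfl⟩ := hw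
  set Φ := urysonInf R (fun z => n • S z) e
  have hnS : ∀ z, 0 ≤ n • S z := fun z => nsmul_nonneg (hSpos z) n
  have hexcess : (R (e - f) - n • S (e - f))⁺ ≤ R e - Φ := by
    refine sup_le ?_ (sub_nonneg.mpr (urysonInf_le_left hRpos hnS (hS.nsmul n) e))
    calc R (e - f) - n • S (e - f) = R e - (R f + n • S (e - f)) := by
          rw [hR.apply_eq_of_fragment hf]; abel
    _ ≤ R e - Φ := sub_le_sub_left (urysonInf_le hRpos hnS hf) _
  have hρR : ρ (R (e - f)) ≤ n • (ε • S e) + (R e - Φ) :=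
    calc ρ (R (e - f)) ≤ ρ (n • S (e - f)) + (R (e - f) - n • S (e - f))⁺ :=
          hρ.le_apply_add_posPart _ _
    _ ≤ n • (ε • S e) + (R e - Φ) :=
        add_le_add (hρ.map_nsmul _ n ▸ nsmul_le_nsmul_right hρS n) hexcess
  have hGρG : 0 ≤ (T (e - f) - R (e - f)) - ρ (T (e - f) - R (e - f)) :=
    sub_nonneg.mpr (hρ.2.2 _ (sub_nonneg.mpr (hRT _))).2
  calc Φ - n • (ε • S e) = R e - (n • (ε • S e) + (R e - Φ)) := by abel
  _ ≤ R e - ρ (R (e - f)) := sub_le_sub_left hρR _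
  _ = R f + (R (e - f) - ρ (R (e - f))) := by rw [hR.apply_eq_of_fragment hf]; abel
  _ ≤ T f + (T (e - f) - ρ (T (e - f))) := by
      refine add_le_add (hRT f) (le_of_sub_nonneg ?_)
      rw [hρ.map_sub] at hGρG
      convert hGρG using 1
      abel
  _ = ρ (T f) + (T e - ρ (T e)) := by rw [hT.apply_eq_of_fragment hf, hρ.1]; abel

lemma urysonInf_nsmul_le_sSup_admissibleInfs [PosSMulMono ℝ F] (hR : OrthAdd R)
    (hRpos : ∀ x, 0 ≤ R x) (hS : OrthAdd S) (hSpos : ∀ x, 0 ≤ S x) (hT : OrthAdd T)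
    (hTpos : ∀ x, 0 ≤ T x) (hRT : ∀ x, R x ≤ T x) (n : ℕ) :
    urysonInf R (fun z => n • S z) e ≤ sSup (admissibleInfs S T e) := by
  refine le_of_forall_pos_le_add_smul (hSpos e) fun δ hδ => ?_
  have hε : 0 < δ / (n + 1) := by positivity
  have hnε : n • ((δ / (n + 1)) • S e) ≤ δ • S e := by
    rw [← Nat.cast_smul_eq_nsmul ℝ, smul_smul]
    refine smul_le_smul_of_le_of_nonneg ?_ (hSpos e)
    rw [mul_div_assoc', div_le_iff₀ (by positivity)]
    nlinarith
  calc urysonInf R (fun z => n • S z) e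
      ≤ sInf (admissibleSums S T e (δ / (n + 1))) + n • ((δ / (n + 1)) • S e) :=
        sub_le_iff_le_add.mp <| le_csInf ⟨T e, self_mem_admissibleSums hS hSpos hε.le⟩
          fun _ hw => urysonInf_nsmul_sub_le_of_mem_admissibleSums hR hRpos hS hSpos hT hRT n hw
  _ ≤ sSup (admissibleInfs S T e) + δ • S e :=
        add_le_add (le_csSup (bddAbove_admissibleInfs hS hSpos hTpos) ⟨_, hε, rfl⟩) hnε

lemma sInf_admissibleSums_le [PosSMulMono ℝ F] (hS : Uryson S) (hSpos : ∀ x, 0 ≤ S x)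
    (hT : OrthAdd T) (hTpos : ∀ x, 0 ≤ T x) (hR : OrthAdd R) (hRpos : ∀ x, 0 ≤ R x)
    (hRT : ∀ x, R x ≤ T x) (hcompl : UDisjointPos (fun x => T x - R x) S) (hε : 0 < ε) :
    sInf (admissibleSums S T e ε) ≤ R e := by
  have hG : OrthAdd fun x => T x - R x := fun a b hab => by
    simp only [hT a b hab, hR a b hab]; abel
  refine sub_nonpos.mp (nonpos_of_forall_le_posPart_sub_nsmul
    (principalProj_idem (ε • S e) (T e - R e)) fun n => ?_)
  rw [← sub_nonpos, sub_sub]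
  refine (le_urysonInf fun f hf => ?_).trans
    (urysonInf_nsmul_nonpos hG (fun x => sub_nonneg.mpr (hRT x)) hS hSpos hcompl n e)
  exact sub_le_iff_le_add.mpr
    (sInf_admissibleSums_le_of_fragment hS.1 hSpos hT hTpos hR hRpos hRT hε hf n)

end BandFormula

theorem stmt8_general {E F : Type} [Lattice E] [AddCommGroup E]
    [CovariantClass E E (· + ·) (· ≤ ·)]
    [ConditionallyCompleteLattice F] [AddCommGroup F]
    [CovariantClass F F (· + ·) (· ≤ ·)] [Module ℝ F] [PosSMulMono ℝ F]
    (S : E → F) (hS : Uryson S) (hSpos : ∀ x, 0 ≤ S x)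
    (T : E → F) (hT : Uryson T) (hTpos : ∀ x, 0 ≤ T x)
    (R : E → F) (hR : Uryson R) (hRpos : ∀ x, 0 ≤ R x) (hRT : ∀ x, R x ≤ T x)
    (hRband : ∀ U : E → F, Uryson U → (∀ x, 0 ≤ U x) →
      UDisjointPos U S → UDisjointPos R U)
    (hcompl : UDisjointPos (fun x => T x - R x) S) :
    ∀ e : E,
      R e = sSup {v : F | ∃ ε : ℝ, 0 < ε ∧
        v = sInf {w : F | ∃ (ρ : F → F) (f : E), IsBandProj ρ ∧ Fragment f e ∧
          ρ (S (e - f)) ≤ ε • S e ∧ w = ρ (T f) + (T e - ρ (T e))}} := by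
  intro e
  change R e = sSup (admissibleInfs S T e)
  refine le_antisymm ?_ (csSup_le ⟨_, 1, one_pos, rfl⟩ ?_)
  · rw [eq_iSup_urysonInf_nsmul hR hRpos hS.1 hSpos hRband e]
    exact ciSup_le (urysonInf_nsmul_le_sSup_admissibleInfs hR.1 hRpos hS.1 hSpos hT.1 hTpos hRT)
  · rintro _ ⟨ε, hε, rfl⟩
    exact sInf_admissibleSums_le hS hSpos hT.1 hTpos hR.1 hRpos hRT hcompl hε

/-- Band-projection formula for `π_S`, the projection onto the band `{S}^⊥⊥` generated by
a positive abstract Uryson operator `S`. `R` plays the role of `π_S T`: it is a positive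
Uryson operator, `R ≤ T`, `R ∈ {S}^⊥⊥` (disjoint from every positive Uryson operator
disjoint from `S`), and `T - R` is disjoint from `S`. Then
`R e = sup_{ε>0} inf { ρ (T f) + ρ^⊥ (T e) : ρ (S (e - f)) ≤ ε • S e, f ⊑ e, ρ ∈ B(F) }`. -/
theorem stmt8 {E F : Type} [Lattice E] [AddCommGroup E]
    [CovariantClass E E (· + ·) (· ≤ ·)] [Module ℝ E]
    [ConditionallyCompleteLattice F] [AddCommGroup F]
    [CovariantClass F F (· + ·) (· ≤ ·)] [Module ℝ F] [PosSMulMono ℝ F]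
    (S : E → F) (hS : Uryson S) (hSpos : ∀ x, 0 ≤ S x)
    (T : E → F) (hT : Uryson T) (hTpos : ∀ x, 0 ≤ T x)
    (R : E → F) (hR : Uryson R) (hRpos : ∀ x, 0 ≤ R x) (hRT : ∀ x, R x ≤ T x)
    (hRband : ∀ U : E → F, Uryson U → (∀ x, 0 ≤ U x) →
      UDisjointPos U S → UDisjointPos R U)
    (hcompl : UDisjointPos (fun x => T x - R x) S) :
    ∀ e : E,
      R e = sSup {v : F | ∃ ε : ℝ, 0 < ε ∧
        v = sInf {w : F | ∃ (ρ : F → F) (f : E), IsBandProj ρ ∧ Fragment f e ∧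
          ρ (S (e - f)) ≤ ε • S e ∧ w = ρ (T f) + (T e - ρ (T e))}} :=
  stmt8_general S hS hSpos T hT hTpos R hR hRpos hRT hRband hcompl
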